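/- arXiv:2310.13035 — 3 statements merged into one kernel-verified Lean document; each statement's English description precedes it below -/
import Mathlib

section
/- Let n ≥ 1 and define m_i, k_i, Y_i, Z_i from n by the Gr3 recurrence. Then the Collatz orbit of n reaches 1 if and only if there exists a natural number x such that n · 3^x + Y_x = 2^(Z_x) (equivalently, m_x = 1). -/
/-
Write `n = m₀ 2^{k₀}` and `3 mᵢ + 1 = m_{i+1} 2^{k_{i+1}}` with every `mᵢ` odd. The Collatz orbit of
`n` halves `k₀` times down to `m₀`, and from each odd `mᵢ` it takes one `3x+1` step and `k_{i+1}`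
halvings down to `m_{i+1}`; hence `collatz^[Zᵢ + i] n = mᵢ`, so the orbit passes through exactly the
odd numbers `mᵢ`, and it reaches `1` iff some `mᵢ = 1` (the only odd value on the cycle `1 → 4 → 2`
is `1`). Unfolding the recurrences gives `n 3^i + Yᵢ = mᵢ 2^{Zᵢ}`, so `mᵢ = 1` iff
`n 3^i + Yᵢ = 2^{Zᵢ}`.
-/

/-- The Collatz step. -/
def collatz (m : ℕ) : ℕ := if m % 2 = 0 then m / 2 else 3 * m + 1

lemma collatz_of_odd {a : ℕ} (ha : Odd a) : collatz a = 3 * a + 1 := by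
  simp [collatz, Nat.odd_iff.mp ha]

lemma collatz_iterate_mul_two_pow (a k : ℕ) : collatz^[k] (a * 2 ^ k) = a := by
  induction k with
  | zero => simp
  | succ k ih =>
    have halve : collatz (a * 2 ^ (k + 1)) = a * 2 ^ k := by
      simp [collatz, pow_succ, ← mul_assoc]
    rw [Function.iterate_succ_apply, halve, ih]

lemma collatz_iterate_one_mem (d : ℕ) : collatz^[d] 1 ∈ ({1, 4, 2} : Finset ℕ) := by
  induction d with
  | zero => simp
  | succ d ih =>
    rw [Function.iterate_succ_apply']
    simp only [Finset.mem_insert, Finset.mem_singleton] at ih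
    rcases ih with h | h | h <;> simp [h, collatz]

lemma eq_one_of_odd_of_collatz_iterate_one {a d : ℕ} (ha : Odd a) (hd : collatz^[d] 1 = a) :
    a = 1 := by
  have hmem := collatz_iterate_one_mem d
  simp only [hd, Finset.mem_insert, Finset.mem_singleton] at hmem
  rcases hmem with h | rfl | rfl
  · exact h
  all_goals exact absurd ha (by decide)

lemma div_two_pow_padicValNat_mul (a : ℕ) :
    a / 2 ^ padicValNat 2 a * 2 ^ padicValNat 2 a = a :=
  Nat.div_mul_cancel pow_padicValNat_dvd

lemma odd_div_two_pow_padicValNat {a : ℕ} (ha : a ≠ 0) : Odd (a / 2 ^ padicValNat 2 a) := by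
  rw [← Nat.not_even_iff_odd, even_iff_two_dvd, ← Nat.factorization_def a Nat.prime_two]
  exact Nat.not_dvd_ordCompl Nat.prime_two ha

section OddPartRecurrence

variable {n : ℕ} {m k Y Z : ℕ → ℕ}

lemma mul_three_pow_add_eq_mul_two_pow (hm0 : m 0 * 2 ^ k 0 = n)
    (hm : ∀ i, m (i + 1) * 2 ^ k (i + 1) = 3 * m i + 1)
    (hZ : ∀ i, Z i = ∑ j ∈ Finset.range (i + 1), k j)
    (hY0 : Y 0 = 0) (hY : ∀ i, Y (i + 1) = 3 * Y i + 2 ^ Z i) (i : ℕ) :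
    n * 3 ^ i + Y i = m i * 2 ^ Z i := by
  induction i with
  | zero => simp [hY0, hZ, ← hm0]
  | succ i ih =>
    calc n * 3 ^ (i + 1) + Y (i + 1) = (3 * m i + 1) * 2 ^ Z i := by
          rw [hY, add_mul, mul_assoc, ← ih]; ring
      _ = m (i + 1) * 2 ^ Z (i + 1) := by
          rw [← hm, hZ (i + 1), Finset.sum_range_succ, ← hZ, pow_add]; ring

lemma collatz_iterate_eq (hodd : ∀ i, Odd (m i)) (hm0 : m 0 * 2 ^ k 0 = n)
    (hm : ∀ i, m (i + 1) * 2 ^ k (i + 1) = 3 * m i + 1)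
    (hZ : ∀ i, Z i = ∑ j ∈ Finset.range (i + 1), k j) (i : ℕ) :
    collatz^[Z i + i] n = m i := by
  induction i with
  | zero => simpa [hZ, ← hm0] using collatz_iterate_mul_two_pow (m 0) (k 0)
  | succ i ih =>
    have hsteps : Z (i + 1) + (i + 1) = k (i + 1) + 1 + (Z i + i) := by
      rw [hZ (i + 1), Finset.sum_range_succ, ← hZ]; ring
    rw [hsteps, Function.iterate_add_apply, ih, Function.iterate_succ_apply,
      collatz_of_odd (hodd i), ← hm, collatz_iterate_mul_two_pow]

lemma exists_collatz_iterate_eq_one_iff (hodd : ∀ i, Odd (m i))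
    (hreach : ∀ i, collatz^[Z i + i] n = m i) :
    (∃ i, collatz^[i] n = 1) ↔ ∃ x, m x = 1 := by
  constructor
  · rintro ⟨i, hi⟩
    -- the orbit is at `1` after `i` steps, so after `Z i + i` steps it is on the cycle `1 → 4 → 2`
    refine ⟨i, eq_one_of_odd_of_collatz_iterate_one (hodd i) (d := Z i) ?_⟩
    rw [← hreach, Function.iterate_add_apply, hi]
  · rintro ⟨x, hx⟩
    exact ⟨Z x + x, hx ▸ hreach x⟩

end OddPartRecurrence

theorem stmt7 (n : ℕ) (hn : 1 ≤ n) (m k Y Z : ℕ → ℕ)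
    (hk0 : k 0 = padicValNat 2 n)
    (hm0 : m 0 = n / 2 ^ (k 0))
    (hk : ∀ i, k (i + 1) = padicValNat 2 (3 * m i + 1))
    (hm : ∀ i, m (i + 1) = (3 * m i + 1) / 2 ^ (k (i + 1)))
    (hZ : ∀ i, Z i = ∑ j ∈ Finset.range (i + 1), k j)
    (hY0 : Y 0 = 0)
    (hY : ∀ i, Y (i + 1) = 3 * Y i + 2 ^ (Z i)) :
    (∃ i, collatz^[i] n = 1) ↔ (∃ x, n * 3 ^ x + Y x = 2 ^ (Z x)) := by
  have hodd : ∀ i, Odd (m i)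
    | 0 => hm0 ▸ hk0 ▸ odd_div_two_pow_padicValNat (by omega)
    | i + 1 => hm i ▸ hk i ▸ odd_div_two_pow_padicValNat (by omega)
  have hsplit0 : m 0 * 2 ^ k 0 = n := hm0 ▸ hk0 ▸ div_two_pow_padicValNat_mul n
  have hsplit : ∀ i, m (i + 1) * 2 ^ k (i + 1) = 3 * m i + 1 := fun i =>
    hm i ▸ hk i ▸ div_two_pow_padicValNat_mul _
  rw [exists_collatz_iterate_eq_one_iff hodd (collatz_iterate_eq hodd hsplit0 hsplit hZ)]
  refine exists_congr fun x => ?_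
  rw [mul_three_pow_add_eq_mul_two_pow hsplit0 hsplit hZ hY0 hY,
    mul_eq_right₀ (pow_ne_zero _ two_ne_zero)]
end

section
/- In the Jaśkowski structure J = { (k, w) ∈ ℤ × ℚ : w ≥ 0 ∧ (w = 0 → k ≥ 0) } with componentwise addition, for every x ∈ J there exists y ∈ J such that x = y + y or x = y + y + (1,0); more generally, for every m ≥ 1 and every x ∈ J there exist y ∈ J and r < m with x = m·y + r·(1,0). -/
/-- The Jaśkowski structure: pairs `(k, w)` with `k : ℤ`, `w : ℚ`, `w ≥ 0`,
and `k ≥ 0` whenever `w = 0`. -/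
def J : Type := { p : ℤ × ℚ // 0 ≤ p.2 ∧ (p.2 = 0 → 0 ≤ p.1) }

/-- Componentwise addition on `J`. -/
def jadd (a b : J) : J :=
  ⟨(a.1.1 + b.1.1, a.1.2 + b.1.2), by
    obtain ⟨ha1, ha2⟩ := a.2
    obtain ⟨hb1, hb2⟩ := b.2
    refine ⟨add_nonneg ha1 hb1, fun h => ?_⟩
    simp only [] at h
    have h' : a.1.2 + b.1.2 = 0 := h
    have hA : a.1.2 = 0 := by linarith
    have hB : b.1.2 = 0 := by linarith
    exact add_nonneg (ha2 hA) (hb2 hB)⟩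

/-- The zero of `J`. -/
def jzero : J := ⟨(0, 0), by norm_num⟩

/-- The one of `J`. -/
def jone : J := ⟨(1, 0), by norm_num⟩

/-- `m`-fold sum of an element of `J`. -/
def jsmul : ℕ → J → J
  | 0, _ => jzero
  | m + 1, x => jadd x (jsmul m x)

theorem J.ext {a b : J} (h : a.1 = b.1) : a = b :=
  Subtype.ext h

theorem jadd_val (a b : J) : (jadd a b).1 = a.1 + b.1 :=
  rfl

theorem jsmul_val (n : ℕ) (y : J) : (jsmul n y).1 = n • y.1 := by
  induction n with
  | zero => rw [zero_nsmul]; rfl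
  | succ n ih => rw [jsmul, jadd_val, ih, succ_nsmul']

/-- Division with remainder by `m`: the quotient of `(k, w)` is `(k / m, w / m)`, which stays in
`J` because `w / m = 0` forces `w = 0`, hence `k ≥ 0`. -/
theorem exists_eq_jsmul_add_jsmul_jone (m : ℕ) (hm : 0 < m) (x : J) :
    ∃ (y : J) (r : ℕ), r < m ∧ x = jadd (jsmul m y) (jsmul r jone) := by
  obtain ⟨⟨k, w⟩, hw, hk⟩ := x
  have hmZ : (0 : ℤ) < m := by exact_mod_cast hm
  have hmQ : (0 : ℚ) < m := by exact_mod_cast hm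
  obtain ⟨r, hr⟩ := Int.eq_ofNat_of_zero_le (Int.emod_nonneg k hmZ.ne')
  have hy_mem : 0 ≤ w / m ∧ (w / m = 0 → 0 ≤ k / (m : ℤ)) := by
    refine ⟨div_nonneg hw hmQ.le, fun h => Int.ediv_nonneg (hk ?_) hmZ.le⟩
    simpa [hmQ.ne'] using h
  obtain ⟨y, hy_val⟩ : ∃ y : J, y.1 = (k / (m : ℤ), w / m) := ⟨⟨_, hy_mem⟩, rfl⟩
  refine ⟨y, r, by have := Int.emod_lt_of_pos k hmZ; omega, J.ext ?_⟩
  rw [jadd_val, jsmul_val, jsmul_val, hy_val]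
  simp only [jone, Prod.smul_mk, Prod.mk_add_mk, nsmul_eq_mul, mul_one, mul_zero, add_zero,
    Prod.mk.injEq]
  constructor
  · linarith [Int.mul_ediv_add_emod k m]
  · field_simp

theorem stmt13 :
    (∀ x : J, ∃ y : J, x = jadd y y ∨ x = jadd (jadd y y) jone) ∧
    (∀ m : ℕ, 1 ≤ m → ∀ x : J, ∃ (y : J) (r : ℕ), r < m ∧
      x = jadd (jsmul m y) (jsmul r jone)) := by
  refine ⟨fun x => ?_, exists_eq_jsmul_add_jsmul_jone⟩
  obtain ⟨y, r, hr, rfl⟩ := exists_eq_jsmul_add_jsmul_jone 2 two_pos x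
  refine ⟨y, ?_⟩
  interval_cases r
  · left
    apply J.ext
    simp [jadd_val, jsmul_val, two_mul]
  · right
    apply J.ext
    simp [jadd_val, jsmul_val, two_mul]
end

section
/- Define on J = { (k, w) ∈ ℤ × ℚ : w ≥ 0 ∧ (w = 0 → k ≥ 0) } the order x < y iff there exists z ∈ J with z ≠ (0,0) and x + z = y. Then every reachable element (n, 0), n ∈ ℕ, is strictly less than every unreachable element (k, w) with w > 0; and the set of unreachable elements has no minimum with respect to this order. -/
/-- The order on J: x < y iff some nonzero z satisfies x + z = y. -/
def jlt (x y : J) : Prop := ∃ z : J, z ≠ jzero ∧ jadd x z = y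

def J.ofPos (k : ℤ) (w : ℚ) (hw : 0 < w) : J :=
  ⟨(k, w), hw.le, fun h => absurd h hw.ne'⟩

lemma jsmul_jone_val (n : ℕ) : (jsmul n jone).1 = ((n : ℤ), 0) := by
  induction n with
  | zero => rfl
  | succ m ih =>
    change (jone.1.1 + (jsmul m jone).1.1, jone.1.2 + (jsmul m jone).1.2) = _
    rw [ih]
    simp only [jone, Nat.cast_succ, add_zero, add_comm]

lemma jlt_of_snd_lt {x y : J} (h : x.1.2 < y.1.2) : jlt x y := by
  refine ⟨J.ofPos (y.1.1 - x.1.1) (y.1.2 - x.1.2) (sub_pos.mpr h), fun hz => ?_, ?_⟩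
  · have : y.1.2 - x.1.2 = 0 := congrArg (fun z : J => z.1.2) hz
    linarith
  · apply Subtype.ext
    simp [jadd, J.ofPos]

lemma snd_le_of_jlt {x y : J} (h : jlt x y) : x.1.2 ≤ y.1.2 := by
  obtain ⟨z, -, rfl⟩ := h
  exact le_add_of_nonneg_right z.2.1

theorem stmt15 :
    (∀ (n : ℕ) (a : J), 0 < a.1.2 → jlt (jsmul n jone) a) ∧
    ¬ ∃ a : J, 0 < a.1.2 ∧ ∀ b : J, 0 < b.1.2 → a = b ∨ jlt a b := by
  constructor
  · intro n a ha
    apply jlt_of_snd_lt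
    rwa [jsmul_jone_val]
  · rintro ⟨a, ha, hmin⟩
    -- halving the weight gives an unreachable element that `a` cannot lie below
    have ha2 : 0 < a.1.2 / 2 := half_pos ha
    rcases hmin (J.ofPos a.1.1 (a.1.2 / 2) ha2) ha2 with heq | hlt
    · have : a.1.2 = a.1.2 / 2 := congrArg (fun z : J => z.1.2) heq
      linarith
    · have : a.1.2 ≤ a.1.2 / 2 := snd_le_of_jlt hlt
      linarith
end
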